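/- Let P be a Markov kernel on a measurable space (X, 𝓑(X)) satisfying the drift condition P V(x) ≤ V(x) − ϕ(V(x)) + b·1_C(x) for all x ∈ X, where V : X → [1,∞) is measurable, C ∈ 𝓑(X), b < ∞, and ϕ : [1,∞) → (0,∞) is a non-decreasing concave differentiable function with H_ϕ(t) → ∞ as t → ∞. Then for every k ≥ 0 and all x ∈ X: P V_{k+1}(x) ≤ V_k(x) − ϕ(1) r_ϕ(k) + b r_ϕ(k+1)·1_C(x), where r_ϕ(k) = ϕ(H_ϕ^{-1}(k))/ϕ(1), V_k = H_k ∘ V, and H_k(v) = H_ϕ^{-1}(H_ϕ(v) + k) − H_ϕ^{-1}(k). -/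

import Mathlib

open MeasureTheory ProbabilityTheory Filter Set

noncomputable def iterKernel {X : Type*} [MeasurableSpace X]
    (P : ℕ → Kernel X X) : ℕ → Kernel X X
  | 0 => Kernel.id
  | n + 1 => (P (n + 1)).comp (iterKernel P n)

noncomputable def Hfun (φ : ℝ → ℝ) (t : ℝ) : ℝ := ∫ s in (1:ℝ)..t, (φ s)⁻¹

noncomputable def Hinv (φ : ℝ → ℝ) : ℝ → ℝ := Function.invFunOn (Hfun φ) (Set.Ici 1)

noncomputable def rate (φ : ℝ → ℝ) (εb : ℝ) (n : ℕ) : ℝ := φ (Hinv φ (εb * n)) / φ 1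

noncomputable def deltaSeq (φ : ℝ → ℝ) (εb : ℝ) (k : ℕ) : ℝ := εb * deriv φ (Hinv φ (εb * k))

noncomputable def bbar (φ : ℝ → ℝ) (εb bV : ℝ) : ℝ := 2 * bV + εb * φ 1

noncomputable def Mone (φ : ℝ → ℝ) (εb εν bV cV : ℝ) : ℝ :=
  rate φ εb 1 * (1 + 2 * rate φ εb 1 / (εb * φ 1) * ((bV + cV) / (1 - εν) - 1))

noncomputable def cstar (φ : ℝ → ℝ) (εb εν bV cV : ℝ) : ℝ :=
  ∑' j : ℕ, (1 - εν) ^ j * ∏ k ∈ Finset.Icc 1 j, (1 + deltaSeq φ εb k * Mone φ εb εν bV cV)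

noncomputable def cconst (φ : ℝ → ℝ) (εb εν bV cV : ℝ) : ℝ :=
  2 / (εb * φ 1) * (2 + bbar φ εb bV / εν +
    cstar φ εb εν bV cV * bbar φ εb bV * rate φ εb 1 * (1 + rate φ εb 1 / (εb * φ 1)))

noncomputable def Qmeas {X : Type*} [MeasurableSpace X]
    (P : ℕ → Kernel X X) (ν : ℕ → Measure X) (εν : ℝ) (k : ℕ) (x : X) : Measure X :=
  (ENNReal.ofReal (1 - εν))⁻¹ • (P k x - ENNReal.ofReal εν • ν k)


/-!
Extend `ϕ` below `1` by the constant `ϕ 1`. Then `H_ϕ` is an increasing bijection of `ℝ` whose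
inverse `K` satisfies `K' = ϕ ∘ K`, and `v ↦ K (H_ϕ v + c)` is the time-`c` flow `G_c` of
`y' = ϕ y`. Its derivative `ϕ (G_c v) / ϕ v` is antitone because `ϕ'` is, so `G_c` is concave on
`[1, ∞)` and lies below its tangent at `v = V x`; integrating against `P x` and inserting the
drift condition bounds `P G_{k+1} (x)` by `G_{k+1} v - ϕ (G_{k+1} v) + b 1_C(x) ϕ (G_{k+1} v) / ϕ v`.
Convexity of `K` gives `G_{k+1} v - ϕ (G_{k+1} v) ≤ G_k v` and `K k + ϕ (K k) ≤ K (k + 1)`, and the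
slope `ϕ (G_{k+1} v) / ϕ v` is largest at `v = 1`, where it is `r_ϕ (k + 1)`.
-/

section Hfun

variable {f : ℝ → ℝ}

theorem Hfun_one : Hfun f 1 = 0 := intervalIntegral.integral_same

theorem hasDerivAt_Hfun (hf : Continuous f) (hpos : ∀ t, 0 < f t) (t : ℝ) :
    HasDerivAt (Hfun f) (f t)⁻¹ t := by
  have hinv : Continuous fun s => (f s)⁻¹ := hf.inv₀ fun s => (hpos s).ne'
  exact intervalIntegral.integral_hasDerivAt_right (hinv.intervalIntegrable _ _)
    (hinv.stronglyMeasurableAtFilter _ _) hinv.continuousAt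

theorem continuous_Hfun (hf : Continuous f) (hpos : ∀ t, 0 < f t) : Continuous (Hfun f) :=
  continuous_iff_continuousAt.2 fun t => (hasDerivAt_Hfun hf hpos t).continuousAt

theorem strictMono_Hfun (hf : Continuous f) (hpos : ∀ t, 0 < f t) : StrictMono (Hfun f) :=
  strictMono_of_deriv_pos fun t => by
    rw [(hasDerivAt_Hfun hf hpos t).deriv]
    exact inv_pos.2 (hpos t)

theorem Hfun_le_of_le_one (hf : Continuous f) (hpos : ∀ t, 0 < f t) (hmono : Monotone f)
    {t : ℝ} (ht : t ≤ 1) : Hfun f t ≤ (t - 1) * (f 1)⁻¹ := by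
  have hbound := convex_Iic (1 : ℝ) |>.mul_sub_le_image_sub_of_le_deriv
    (continuous_Hfun hf hpos).continuousOn
    (fun s _ => (hasDerivAt_Hfun hf hpos s).differentiableAt.differentiableWithinAt)
    (C := (f 1)⁻¹) (fun s hs => by
      rw [interior_Iic] at hs
      rw [(hasDerivAt_Hfun hf hpos s).deriv]
      exact inv_anti₀ (hpos s) (hmono hs.le))
    t ht 1 self_mem_Iic ht
  rw [Hfun_one] at hbound
  linarith

theorem surjective_Hfun (hf : Continuous f) (hpos : ∀ t, 0 < f t) (hmono : Monotone f)
    (hH : Tendsto (Hfun f) atTop atTop) : Function.Surjective (Hfun f) := by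
  refine (continuous_Hfun hf hpos).surjective hH
    (tendsto_atBot_mono' (f₁ := fun t => (t - 1) * (f 1)⁻¹) atBot ?_ ?_)
  · filter_upwards [eventually_le_atBot 1] with t ht using Hfun_le_of_le_one hf hpos hmono ht
  · exact (tendsto_atBot_add_const_right _ (-1) tendsto_id).atBot_mul_const (inv_pos.2 (hpos 1))

end Hfun

noncomputable def HfunInv (f : ℝ → ℝ) : ℝ → ℝ := Function.invFun (Hfun f)

section HfunInv

variable {f : ℝ → ℝ}

theorem Hfun_HfunInv (hsurj : Function.Surjective (Hfun f)) (s : ℝ) :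
    Hfun f (HfunInv f s) = s :=
  Function.invFun_eq (hsurj s)

theorem HfunInv_Hfun (hf : Continuous f) (hpos : ∀ t, 0 < f t) (t : ℝ) :
    HfunInv f (Hfun f t) = t :=
  Function.leftInverse_invFun (strictMono_Hfun hf hpos).injective t

theorem monotone_HfunInv (hf : Continuous f) (hpos : ∀ t, 0 < f t)
    (hsurj : Function.Surjective (Hfun f)) : Monotone (HfunInv f) := fun s t hst => by
  rwa [← (strictMono_Hfun hf hpos).le_iff_le, Hfun_HfunInv hsurj, Hfun_HfunInv hsurj]

theorem one_le_HfunInv (hf : Continuous f) (hpos : ∀ t, 0 < f t)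
    (hsurj : Function.Surjective (Hfun f)) {s : ℝ} (hs : 0 ≤ s) : 1 ≤ HfunInv f s := by
  rwa [← (strictMono_Hfun hf hpos).le_iff_le, Hfun_one, Hfun_HfunInv hsurj]

theorem hasDerivAt_HfunInv (hf : Continuous f) (hpos : ∀ t, 0 < f t)
    (hsurj : Function.Surjective (Hfun f)) (s : ℝ) :
    HasDerivAt (HfunInv f) (f (HfunInv f s)) s := by
  have hcont : Continuous (HfunInv f) :=
    (monotone_HfunInv hf hpos hsurj).continuous_of_surjective
      fun t => ⟨Hfun f t, HfunInv_Hfun hf hpos t⟩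
  simpa using (hasDerivAt_Hfun hf hpos (HfunInv f s)).of_local_left_inverse hcont.continuousAt
    (inv_ne_zero (hpos _).ne') (Eventually.of_forall (Hfun_HfunInv hsurj))

theorem mul_sub_le_HfunInv_sub (hf : Continuous f) (hpos : ∀ t, 0 < f t) (hmono : Monotone f)
    (hsurj : Function.Surjective (Hfun f)) {s t : ℝ} (hst : s ≤ t) :
    f (HfunInv f s) * (t - s) ≤ HfunInv f t - HfunInv f s :=
  convex_Ici s |>.mul_sub_le_image_sub_of_le_deriv
    (fun r _ => (hasDerivAt_HfunInv hf hpos hsurj r).continuousAt.continuousWithinAt)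
    (fun r _ => (hasDerivAt_HfunInv hf hpos hsurj r).differentiableAt.differentiableWithinAt)
    (fun r hr => by
      rw [interior_Ici] at hr
      rw [(hasDerivAt_HfunInv hf hpos hsurj r).deriv]
      exact hmono (monotone_HfunInv hf hpos hsurj hr.le))
    s self_mem_Ici t hst hst

theorem HfunInv_sub_le_mul_sub (hf : Continuous f) (hpos : ∀ t, 0 < f t) (hmono : Monotone f)
    (hsurj : Function.Surjective (Hfun f)) {s t : ℝ} (hst : s ≤ t) :
    HfunInv f t - HfunInv f s ≤ f (HfunInv f t) * (t - s) :=
  convex_Iic t |>.image_sub_le_mul_sub_of_deriv_le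
    (fun r _ => (hasDerivAt_HfunInv hf hpos hsurj r).continuousAt.continuousWithinAt)
    (fun r _ => (hasDerivAt_HfunInv hf hpos hsurj r).differentiableAt.differentiableWithinAt)
    (fun r hr => by
      rw [interior_Iic] at hr
      rw [(hasDerivAt_HfunInv hf hpos hsurj r).deriv]
      exact hmono (monotone_HfunInv hf hpos hsurj hr.le))
    s hst t self_mem_Iic hst

end HfunInv

theorem ConcaveOn.le_add_mul_sub_of_hasDerivAt {S : Set ℝ} {g : ℝ → ℝ} {g' x y : ℝ}
    (hg : ConcaveOn ℝ S g) (hx : x ∈ S) (hy : y ∈ S) (hd : HasDerivAt g g' x) :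
    g y ≤ g x + g' * (y - x) := by
  rcases lt_trichotomy y x with hyx | rfl | hxy
  · have := hg.le_slope_of_hasDerivAt hy hx hyx hd
    rw [slope_def_field, le_div_iff₀ (sub_pos.2 hyx)] at this
    linarith
  · simp
  · have := hg.slope_le_of_hasDerivAt hx hy hxy hd
    rw [slope_def_field, div_le_iff₀ (sub_pos.2 hxy)] at this
    linarith

/-- In the paper's notation, `H_k = Hflow ϕ k - H_ϕ⁻¹ k`. -/
noncomputable def Hflow (f : ℝ → ℝ) (c v : ℝ) : ℝ := HfunInv f (Hfun f v + c)

section Hflow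

variable {f : ℝ → ℝ}

theorem Hflow_one (c : ℝ) : Hflow f c 1 = HfunInv f c := by
  rw [Hflow, Hfun_one, zero_add]

theorem hasDerivAt_Hflow (hf : Continuous f) (hpos : ∀ t, 0 < f t)
    (hsurj : Function.Surjective (Hfun f)) (c v : ℝ) :
    HasDerivAt (Hflow f c) (f (Hflow f c v) / f v) v :=
  (hasDerivAt_HfunInv hf hpos hsurj _).comp v ((hasDerivAt_Hfun hf hpos v).add_const c)

theorem le_Hflow (hf : Continuous f) (hpos : ∀ t, 0 < f t)
    (hsurj : Function.Surjective (Hfun f)) {c : ℝ} (hc : 0 ≤ c) (v : ℝ) : v ≤ Hflow f c v := by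
  conv_lhs => rw [← HfunInv_Hfun hf hpos v]
  exact monotone_HfunInv hf hpos hsurj (le_add_of_nonneg_right hc)

theorem Hflow_add_one_sub_le (hf : Continuous f) (hpos : ∀ t, 0 < f t) (hmono : Monotone f)
    (hsurj : Function.Surjective (Hfun f)) (c v : ℝ) :
    Hflow f (c + 1) v - f (Hflow f (c + 1) v) ≤ Hflow f c v := by
  have := HfunInv_sub_le_mul_sub hf hpos hmono hsurj (le_add_of_nonneg_right zero_le_one :
    Hfun f v + c ≤ Hfun f v + c + 1)
  rw [Hflow, Hflow, ← add_assoc]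
  linarith

theorem antitoneOn_Hflow_slope (hf : Continuous f) (hpos : ∀ t, 0 < f t)
    (hsurj : Function.Surjective (Hfun f)) (hconc : ConcaveOn ℝ (Ici 1) f)
    (hdiff : ∀ t, 1 < t → DifferentiableAt ℝ f t) {c : ℝ} (hc : 0 ≤ c) :
    AntitoneOn (fun v => f (Hflow f c v) / f v) (Ici 1) := by
  have hG := hasDerivAt_Hflow hf hpos hsurj c
  have hslope : ∀ v, 1 < v → HasDerivAt (fun v => f (Hflow f c v) / f v)
      (f (Hflow f c v) * (deriv f (Hflow f c v) - deriv f v) / f v ^ 2) v := by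
    intro v hv
    have hGv : 1 < Hflow f c v := hv.trans_le (le_Hflow hf hpos hsurj hc v)
    refine (((hdiff _ hGv).hasDerivAt.comp v (hG v)).div (hdiff v hv).hasDerivAt
      (hpos v).ne').congr_deriv ?_
    simp only [Function.comp_apply]
    field_simp [(hpos v).ne']
  refine antitoneOn_of_deriv_nonpos (convex_Ici 1)
    ((hf.comp (continuous_iff_continuousAt.2 fun v => (hG v).continuousAt)).div hf
      fun v => (hpos v).ne').continuousOn
    (fun v hv => ?_) (fun v hv => ?_)
  · rw [interior_Ici] at hv
    exact (hslope v hv).differentiableAt.differentiableWithinAt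
  · rw [interior_Ici] at hv
    rw [(hslope v hv).deriv]
    have hconc' : ConcaveOn ℝ (Ioi 1) f := hconc.subset Ioi_subset_Ici_self (convex_Ioi 1)
    have hderiv : deriv f (Hflow f c v) ≤ deriv f v :=
      hconc'.antitoneOn_deriv hdiff hv (hv.trans_le (le_Hflow hf hpos hsurj hc v))
        (le_Hflow hf hpos hsurj hc v)
    exact div_nonpos_of_nonpos_of_nonneg
      (mul_nonpos_of_nonneg_of_nonpos (hpos _).le (sub_nonpos.2 hderiv)) (sq_nonneg _)

theorem concaveOn_Hflow (hf : Continuous f) (hpos : ∀ t, 0 < f t)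
    (hsurj : Function.Surjective (Hfun f)) (hconc : ConcaveOn ℝ (Ici 1) f)
    (hdiff : ∀ t, 1 < t → DifferentiableAt ℝ f t) {c : ℝ} (hc : 0 ≤ c) :
    ConcaveOn ℝ (Ici 1) (Hflow f c) := by
  have hG := hasDerivAt_Hflow hf hpos hsurj c
  refine AntitoneOn.concaveOn_of_deriv (convex_Ici 1)
    (fun v _ => (hG v).continuousAt.continuousWithinAt)
    (fun v _ => (hG v).differentiableAt.differentiableWithinAt) ?_
  rw [interior_Ici]
  intro v hv w hw hvw
  rw [(hG v).deriv, (hG w).deriv]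
  exact antitoneOn_Hflow_slope hf hpos hsurj hconc hdiff hc (mem_Ici_of_Ioi hv)
    (mem_Ici_of_Ioi hw) hvw

end Hflow

section Drift

variable {f : ℝ → ℝ} {Ω : Type*} [MeasurableSpace Ω] {μ : Measure Ω} [IsProbabilityMeasure μ]
  {V : Ω → ℝ}

theorem integral_Hflow_le (hf : Continuous f) (hpos : ∀ t, 0 < f t)
    (hsurj : Function.Surjective (Hfun f)) (hconc : ConcaveOn ℝ (Ici 1) f)
    (hdiff : ∀ t, 1 < t → DifferentiableAt ℝ f t) {c v : ℝ} (hc : 0 ≤ c) (hv : 1 ≤ v)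
    (hV1 : ∀ y, 1 ≤ V y) (hVint : Integrable V μ)
    (hint : Integrable (fun y => Hflow f c (V y)) μ) :
    ∫ y, Hflow f c (V y) ∂μ ≤ Hflow f c v + f (Hflow f c v) / f v * (∫ y, V y ∂μ - v) := by
  have htangent : ∀ y, Hflow f c (V y) ≤ Hflow f c v + f (Hflow f c v) / f v * (V y - v) :=
    fun y => (concaveOn_Hflow hf hpos hsurj hconc hdiff hc).le_add_mul_sub_of_hasDerivAt hv
      (hV1 y) (hasDerivAt_Hflow hf hpos hsurj c v)
  have hlin : Integrable (fun y => f (Hflow f c v) / f v * (V y - v)) μ :=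
    (hVint.sub (integrable_const v)).const_mul _
  calc ∫ y, Hflow f c (V y) ∂μ
      ≤ ∫ y, (Hflow f c v + f (Hflow f c v) / f v * (V y - v)) ∂μ :=
        integral_mono hint ((integrable_const _).add hlin) htangent
    _ = Hflow f c v + f (Hflow f c v) / f v * (∫ y, V y ∂μ - v) := by
        rw [integral_add (integrable_const _) hlin, integral_const_mul,
          integral_sub hVint (integrable_const v)]
        simp

theorem integral_Hflow_add_one_sub_le (hf : Continuous f) (hpos : ∀ t, 0 < f t)
    (hmono : Monotone f) (hsurj : Function.Surjective (Hfun f))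
    (hconc : ConcaveOn ℝ (Ici 1) f) (hdiff : ∀ t, 1 < t → DifferentiableAt ℝ f t)
    {c v d : ℝ} (hc : 0 ≤ c) (hv : 1 ≤ v) (hd : 0 ≤ d)
    (hV1 : ∀ y, 1 ≤ V y) (hVint : Integrable V μ)
    (hint : Integrable (fun y => Hflow f (c + 1) (V y) - HfunInv f (c + 1)) μ)
    (hdrift : ∫ y, V y ∂μ ≤ v - f v + d) :
    ∫ y, (Hflow f (c + 1) (V y) - HfunInv f (c + 1)) ∂μ ≤
      Hflow f c v - HfunInv f c - f (HfunInv f c) + d * (f (HfunInv f (c + 1)) / f 1) := by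
  have hc1 : 0 ≤ c + 1 := by linarith
  have hflowint : Integrable (fun y => Hflow f (c + 1) (V y)) μ :=
    (hint.add (integrable_const (HfunInv f (c + 1)))).congr
      (Eventually.of_forall fun y => sub_add_cancel _ _)
  rw [integral_sub hflowint (integrable_const _), integral_const, probReal_univ, one_smul]
  set G := Hflow f (c + 1) v
  have hslope : f G / f v ≤ f (HfunInv f (c + 1)) / f 1 := by
    simpa [Hflow_one] using
      antitoneOn_Hflow_slope hf hpos hsurj hconc hdiff hc1 self_mem_Ici hv hv
  have hstep : HfunInv f c + f (HfunInv f c) ≤ HfunInv f (c + 1) := by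
    have := mul_sub_le_HfunInv_sub hf hpos hmono hsurj (le_add_of_nonneg_right zero_le_one :
      c ≤ c + 1)
    linarith
  calc ∫ y, Hflow f (c + 1) (V y) ∂μ - HfunInv f (c + 1)
      ≤ G + f G / f v * (∫ y, V y ∂μ - v) - HfunInv f (c + 1) := by
        gcongr
        exact integral_Hflow_le hf hpos hsurj hconc hdiff hc1 hv hV1 hVint hflowint
    _ ≤ G + f G / f v * (d - f v) - HfunInv f (c + 1) := by
        gcongr G + ?_ * ?_ - _
        · exact div_nonneg (hpos _).le (hpos _).le
        · linarith
    _ = G - f G + f G / f v * d - HfunInv f (c + 1) := by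
        field_simp [(hpos v).ne']
        ring
    _ ≤ Hflow f c v + f (HfunInv f (c + 1)) / f 1 * d - HfunInv f (c + 1) := by
        gcongr
        exact Hflow_add_one_sub_le hf hpos hmono hsurj c v
    _ ≤ Hflow f c v - HfunInv f c - f (HfunInv f c) + d * (f (HfunInv f (c + 1)) / f 1) := by
        linarith

end Drift

theorem exists_sub_lt_integral {X : Type*} [MeasurableSpace X] [Nonempty X] (P : Kernel X X)
    [IsMarkovKernel P] {V : X → ℝ} (hbdd : BddBelow (range V))
    (hVint : ∀ x, Integrable V (P x)) {ε : ℝ} (hε : 0 < ε) :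
    ∃ x, V x - ε < ∫ y, V y ∂(P x) := by
  obtain ⟨x, hx⟩ := exists_lt_of_ciInf_lt (lt_add_of_pos_right (⨅ y, V y) hε)
  have hinf : ⨅ y, V y ≤ ∫ y, V y ∂(P x) := by
    simpa using integral_mono (integrable_const (⨅ y, V y)) (hVint x) (ciInf_le hbdd)
  exact ⟨x, by linarith⟩

theorem nonneg_of_drift {X : Type*} [MeasurableSpace X] [Nonempty X] (P : Kernel X X)
    [IsMarkovKernel P] {V g : X → ℝ} (C : Set X) {b ε : ℝ} (hbdd : BddBelow (range V))
    (hVint : ∀ x, Integrable V (P x)) (hε : 0 < ε) (hg : ∀ x, ε ≤ g x)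
    (hdrift : ∀ x, ∫ y, V y ∂(P x) ≤ V x - g x + b * C.indicator 1 x) : 0 ≤ b := by
  by_contra hb
  obtain ⟨x, hx⟩ := exists_sub_lt_integral P hbdd hVint hε
  have hind : b * C.indicator 1 x ≤ 0 :=
    mul_nonpos_of_nonpos_of_nonneg (not_le.1 hb).le (indicator_nonneg (fun _ _ => zero_le_one) x)
  linarith [hdrift x, hg x]

section ExtendBelowOne

variable {ϕ f : ℝ → ℝ}

theorem Hfun_congr_of_eqOn (hfϕ : EqOn f ϕ (Ici 1)) {t : ℝ} (ht : 1 ≤ t) :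
    Hfun f t = Hfun ϕ t :=
  intervalIntegral.integral_congr fun s hs => by
    rw [uIcc_of_le ht] at hs
    simp only [hfϕ (mem_Ici.2 hs.1)]

theorem Hinv_eq_HfunInv (hfϕ : EqOn f ϕ (Ici 1)) (hf : Continuous f) (hpos : ∀ t, 0 < f t)
    (hsurj : Function.Surjective (Hfun f)) {s : ℝ} (hs : 0 ≤ s) : Hinv ϕ s = HfunInv f s := by
  have h1 := one_le_HfunInv hf hpos hsurj hs
  have hex : ∃ a ∈ Ici (1 : ℝ), Hfun ϕ a = s :=
    ⟨_, h1, by rw [← Hfun_congr_of_eqOn hfϕ h1, Hfun_HfunInv hsurj]⟩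
  obtain ⟨hmem, heq⟩ := Function.invFunOn_pos hex
  refine (strictMono_Hfun hf hpos).injective ?_
  rw [Hfun_HfunInv hsurj, Hinv, Hfun_congr_of_eqOn hfϕ hmem, heq]

theorem Hinv_Hfun_add_eq_Hflow (hfϕ : EqOn f ϕ (Ici 1)) (hf : Continuous f)
    (hpos : ∀ t, 0 < f t) (hsurj : Function.Surjective (Hfun f)) {c v : ℝ} (hc : 0 ≤ c)
    (hv : 1 ≤ v) : Hinv ϕ (Hfun ϕ v + c) = Hflow f c v := by
  have hH : 0 ≤ Hfun f v := by
    rw [← Hfun_one (f := f)]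
    exact (strictMono_Hfun hf hpos).monotone hv
  rw [← Hfun_congr_of_eqOn hfϕ hv, Hinv_eq_HfunInv hfϕ hf hpos hsurj (add_nonneg hH hc), Hflow]

theorem exists_extension_of_Ici_one (hϕconc : ConcaveOn ℝ (Ici 1) ϕ)
    (hϕmono : MonotoneOn ϕ (Ici 1)) (hϕdiff : ∀ t, 1 ≤ t → DifferentiableAt ℝ ϕ t)
    (hϕpos : ∀ t, 1 ≤ t → 0 < ϕ t) (hH : Tendsto (Hfun ϕ) atTop atTop) :
    ∃ f : ℝ → ℝ, EqOn f ϕ (Ici 1) ∧ Continuous f ∧ (∀ t, 0 < f t) ∧ Monotone f ∧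
      ConcaveOn ℝ (Ici 1) f ∧ (∀ t, 1 < t → DifferentiableAt ℝ f t) ∧
      Function.Surjective (Hfun f) := by
  have hfϕ : EqOn (fun s => ϕ (max s 1)) ϕ (Ici 1) := fun t ht => by
    simp only [max_eq_left (mem_Ici.1 ht)]
  have hf : Continuous fun s => ϕ (max s 1) := ContinuousOn.comp_continuous
    (fun t ht => (hϕdiff t ht).continuousAt.continuousWithinAt)
    (continuous_id.max continuous_const) fun t => le_max_right t 1
  have hpos : ∀ t, 0 < ϕ (max t 1) := fun t => hϕpos _ (le_max_right t 1)
  have hmono : Monotone fun s => ϕ (max s 1) := fun s t hst =>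
    hϕmono (le_max_right s 1) (le_max_right t 1) (max_le_max hst le_rfl)
  refine ⟨_, hfϕ, hf, hpos, hmono, hϕconc.congr hfϕ.symm, fun t ht => ?_,
    surjective_Hfun hf hpos hmono (hH.congr' ?_)⟩
  · exact (hϕdiff t ht.le).congr_of_eventuallyEq <| by
      filter_upwards [Ioi_mem_nhds ht] with s hs using hfϕ (mem_Ici_of_Ioi hs)
  · filter_upwards [eventually_ge_atTop 1] with t ht using (Hfun_congr_of_eqOn hfϕ ht).symm

end ExtendBelowOne

theorem statement18_general {X : Type*} [MeasurableSpace X]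
    (P : Kernel X X) [IsMarkovKernel P]
    (C : Set X)
    (V : X → ℝ) (hV1 : ∀ x, 1 ≤ V x)
    (b : ℝ)
    (ϕ : ℝ → ℝ)
    (hϕconc : ConcaveOn ℝ (Set.Ici 1) ϕ)
    (hϕmono : MonotoneOn ϕ (Set.Ici 1))
    (hϕdiff : ∀ t, 1 ≤ t → DifferentiableAt ℝ ϕ t)
    (hϕpos : ∀ t, 1 ≤ t → 0 < ϕ t)
    (hH : Tendsto (Hfun ϕ) atTop atTop)
    (hVint : ∀ x, Integrable V (P x))
    (hVkint : ∀ (k : ℕ) (x : X),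
      Integrable (fun y => Hinv ϕ (Hfun ϕ (V y) + k) - Hinv ϕ k) (P x))
    (hdrift : ∀ x, ∫ y, V y ∂(P x) ≤ V x - ϕ (V x) + b * C.indicator 1 x) :
    ∀ (k : ℕ) (x : X),
      ∫ y, (Hinv ϕ (Hfun ϕ (V y) + (k + 1)) - Hinv ϕ (k + 1)) ∂(P x) ≤
        (Hinv ϕ (Hfun ϕ (V x) + k) - Hinv ϕ k) -
          ϕ 1 * (ϕ (Hinv ϕ k) / ϕ 1) +
          b * (ϕ (Hinv ϕ (k + 1)) / ϕ 1) * C.indicator 1 x := by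
  intro k x
  obtain ⟨f, hfϕ, hf, hfpos, hfmono, hfconc, hfdiff, hsurj⟩ :=
    exists_extension_of_Ici_one hϕconc hϕmono hϕdiff hϕpos hH
  have : Nonempty X := ⟨x⟩
  have hb : 0 ≤ b := nonneg_of_drift P C ⟨1, by rintro _ ⟨y, rfl⟩; exact hV1 y⟩ hVint
    (hϕpos 1 le_rfl) (fun y => hϕmono self_mem_Ici (hV1 y) (hV1 y)) hdrift
  have hk : (0 : ℝ) ≤ k := k.cast_nonneg
  have hk1 : (0 : ℝ) ≤ k + 1 := by positivity
  have hint : Integrable (fun y => Hflow f (k + 1) (V y) - HfunInv f (k + 1)) (P x) := by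
    simpa only [Nat.cast_add, Nat.cast_one, Hinv_eq_HfunInv hfϕ hf hfpos hsurj hk1,
      Hinv_Hfun_add_eq_Hflow hfϕ hf hfpos hsurj hk1 (hV1 _)] using hVkint (k + 1) x
  have key := integral_Hflow_add_one_sub_le hf hfpos hfmono hsurj hfconc hfdiff hk (hV1 x)
    (d := b * C.indicator 1 x) (mul_nonneg hb (indicator_nonneg (fun _ _ => zero_le_one) x))
    hV1 (hVint x) hint (by rw [hfϕ (mem_Ici.2 (hV1 x))]; exact hdrift x)
  simp only [Hinv_Hfun_add_eq_Hflow hfϕ hf hfpos hsurj hk1 (hV1 _),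
    Hinv_Hfun_add_eq_Hflow hfϕ hf hfpos hsurj hk (hV1 x), Hinv_eq_HfunInv hfϕ hf hfpos hsurj hk,
    Hinv_eq_HfunInv hfϕ hf hfpos hsurj hk1, ← hfϕ (one_le_HfunInv hf hfpos hsurj hk),
    ← hfϕ (one_le_HfunInv hf hfpos hsurj hk1), ← hfϕ (mem_Ici.2 (le_refl (1 : ℝ)))]
  rw [mul_div_cancel₀ _ (hfpos 1).ne']
  linarith

/-- Proposition A.2 (Douc–Fort–Moulines–Soulier, Prop. 2.1): from a drift
condition for `V`, a sequence of drift inequalities for `V_k = H_k ∘ V`,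
where `H_k(v) = H_ϕ⁻¹(H_ϕ(v) + k) − H_ϕ⁻¹(k)` and `r_ϕ(k) = ϕ(H_ϕ⁻¹(k))/ϕ(1)`. -/
theorem statement18 {X : Type*} [MeasurableSpace X]
    (P : Kernel X X) [IsMarkovKernel P]
    (C : Set X) (hC : MeasurableSet C)
    (V : X → ℝ) (hVmeas : Measurable V) (hV1 : ∀ x, 1 ≤ V x)
    (b : ℝ)
    (ϕ : ℝ → ℝ)
    (hϕconc : ConcaveOn ℝ (Set.Ici 1) ϕ)
    (hϕmono : MonotoneOn ϕ (Set.Ici 1))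
    (hϕdiff : ∀ t, 1 ≤ t → DifferentiableAt ℝ ϕ t)
    (hϕpos : ∀ t, 1 ≤ t → 0 < ϕ t)
    (hH : Tendsto (Hfun ϕ) atTop atTop)
    (hVint : ∀ x, Integrable V (P x))
    (hVkint : ∀ (k : ℕ) (x : X),
      Integrable (fun y => Hinv ϕ (Hfun ϕ (V y) + k) - Hinv ϕ k) (P x))
    (hdrift : ∀ x, ∫ y, V y ∂(P x) ≤ V x - ϕ (V x) + b * C.indicator 1 x) :
    ∀ (k : ℕ) (x : X),
      ∫ y, (Hinv ϕ (Hfun ϕ (V y) + (k + 1)) - Hinv ϕ (k + 1)) ∂(P x) ≤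
        (Hinv ϕ (Hfun ϕ (V x) + k) - Hinv ϕ k) -
          ϕ 1 * (ϕ (Hinv ϕ k) / ϕ 1) +
          b * (ϕ (Hinv ϕ (k + 1)) / ϕ 1) * C.indicator 1 x :=
  statement18_general P C V hV1 b ϕ hϕconc hϕmono hϕdiff hϕpos hH hVint hVkint hdrift
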